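/- Let N ≥ 2 be an integer and z ∈ ℂ, and define φ ∈ ℂ^N by φ_{2m−1} = (−1)^{m+1} and φ_{2m} = (−1)^m·z (for all indices in range). Then M^{(N)}(0,z)·φ = 0 holds if and only if: z·conj z = 1 when N is even, and z + conj z = 0 when N is odd. -/
import Mathlib


open Matrix

/-- The N×N tridiagonal matrix `M^{(N)}(y,z)` with diagonal
`(2y−z, 2y, …, 2y, 2y−conj z)` and `−1` on the subdiagonal and superdiagonal. -/
noncomputable def Mmat (N : ℕ) (y z : ℂ) : Matrix (Fin N) (Fin N) ℂ :=
  Matrix.of fun j k =>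
    if (j : ℕ) = (k : ℕ) then
      (if (j : ℕ) = 0 then 2 * y - z
       else if (j : ℕ) = N - 1 then 2 * y - starRingEnd ℂ z else 2 * y)
    else if (j : ℕ) + 1 = (k : ℕ) ∨ (k : ℕ) + 1 = (j : ℕ) then -1 else 0

noncomputable def psi (z : ℂ) (n : ℕ) : ℂ :=
  if n % 2 = 0 then (-1 : ℂ) ^ (n / 2) else (-1 : ℂ) ^ ((n + 1) / 2) * z

lemma psi_even (z : ℂ) (m : ℕ) : psi z (2 * m) = (-1 : ℂ) ^ m := by
  have h1 : (2 * m) % 2 = 0 := by omega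
  have h2 : (2 * m) / 2 = m := by omega
  simp [psi, h1, h2]

lemma psi_odd (z : ℂ) (m : ℕ) : psi z (2 * m + 1) = (-1 : ℂ) ^ (m + 1) * z := by
  have h1 : (2 * m + 1) % 2 = 1 := by omega
  have h2 : (2 * m + 1 + 1) / 2 = m + 1 := by omega
  simp [psi, h1, h2]

lemma key (N n : ℕ) (hn : n < N) (d : ℂ) (ψ : ℕ → ℂ) :
    ∑ i ∈ Finset.range N,
      ((if n = i then d else if n + 1 = i ∨ i + 1 = n then (-1 : ℂ) else 0) * ψ i)
    = d * ψ n + (if n + 1 < N then -ψ (n + 1) else 0)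
      + (if 0 < n then -ψ (n - 1) else 0) := by
  have hsplit : ∀ i ∈ Finset.range N,
      (if n = i then d else if n + 1 = i ∨ i + 1 = n then (-1 : ℂ) else 0) * ψ i
      = (if n = i then d * ψ i else 0) + (if n + 1 = i then -ψ i else 0)
        + (if 0 < n then (if n - 1 = i then -ψ i else 0) else 0) := by
    intro i _
    by_cases h1 : n = i
    · subst h1
      have h2 : ¬ (n + 1 = n) := by omega
      by_cases h4 : 0 < n
      · have h5 : ¬ (n - 1 = n) := by omega
        simp [h2, h5, h4]
      · simp [h2, h4]
    · rw [if_neg h1]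
      by_cases h2 : n + 1 = i
      · have h3 : ¬ (i + 1 = n) := by omega
        have h4 : ¬ (n - 1 = i) := by omega
        simp only [if_pos (Or.inl h2), if_neg h1, if_pos h2, if_neg h4, if_neg h3]
        by_cases h5 : 0 < n <;> simp [h5] <;> ring
      · by_cases h3 : i + 1 = n
        · have h4 : 0 < n := by omega
          have h5 : n - 1 = i := by omega
          simp only [if_pos (Or.inr h3), if_neg h1, if_neg h2, if_pos h4, if_pos h5]
          ring
        · have h6 : ¬ (n + 1 = i ∨ i + 1 = n) := by tauto
          rw [if_neg h6, if_neg h1, if_neg h2]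
          by_cases h4 : 0 < n
          · rw [if_pos h4, if_neg (by omega : ¬ n - 1 = i)]; ring
          · rw [if_neg h4]; ring
  rw [Finset.sum_congr rfl hsplit, Finset.sum_add_distrib, Finset.sum_add_distrib]
  congr 1
  · congr 1
    · rw [Finset.sum_ite_eq]; simp [Finset.mem_range.mpr hn]
    · rw [Finset.sum_ite_eq]; simp [Finset.mem_range]
  · by_cases h : 0 < n
    · simp only [if_pos h]
      rw [Finset.sum_ite_eq]
      have : n - 1 ∈ Finset.range N := Finset.mem_range.mpr (by omega)
      simp [this]
    · simp [h]

lemma row (N : ℕ) (z : ℂ) (f : Fin N → ℂ) (hf : ∀ k : Fin N, f k = psi z k) (j : Fin N) :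
    (Mmat N 0 z *ᵥ f) j =
      (if (j : ℕ) = 0 then -z else if (j : ℕ) = N - 1 then -(starRingEnd ℂ z) else 0)
        * psi z (j : ℕ)
      + (if (j : ℕ) + 1 < N then -psi z ((j : ℕ) + 1) else 0)
      + (if 0 < (j : ℕ) then -psi z ((j : ℕ) - 1) else 0) := by
  have h : (Mmat N 0 z *ᵥ f) j
      = ∑ i ∈ Finset.range N,
        ((if (j : ℕ) = i then
            (if (j : ℕ) = 0 then -z else if (j : ℕ) = N - 1 then -(starRingEnd ℂ z) else 0)
          else if (j : ℕ) + 1 = i ∨ i + 1 = (j : ℕ) then (-1 : ℂ) else 0) * psi z i) := by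
    rw [mulVec, dotProduct,
      ← Fin.sum_univ_eq_sum_range (fun i =>
        (if (j : ℕ) = i then
            (if (j : ℕ) = 0 then -z else if (j : ℕ) = N - 1 then -(starRingEnd ℂ z) else 0)
          else if (j : ℕ) + 1 = i ∨ i + 1 = (j : ℕ) then (-1 : ℂ) else 0) * psi z i) N]
    apply Finset.sum_congr rfl
    intro k _
    rw [hf k]
    simp only [Mmat, of_apply]
    congr 1
    split_ifs <;> ring
  rw [h, key N (j : ℕ) j.2]

/-- The `y = 0` "anomalous" candidate solution: with 1-based indexing,
`φ_{2m−1} = (−1)^{m+1}` and `φ_{2m} = (−1)^m·z`.  In the 0-based indexing used here, the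
entry at index `n` equals `(−1)^{n/2}` for even `n` and `(−1)^{(n+1)/2}·z` for odd `n`.
Then `M^{(N)}(0,z)·φ = 0` holds iff `z·conj z = 1` (N even), resp. `z + conj z = 0` (N odd). -/
theorem stmt7 (N : ℕ) (hN : 2 ≤ N) (z : ℂ) :
    let φ : Fin N → ℂ := fun n =>
      if (n : ℕ) % 2 = 0 then (-1 : ℂ) ^ ((n : ℕ) / 2)
      else (-1 : ℂ) ^ (((n : ℕ) + 1) / 2) * z
    (Mmat N 0 z *ᵥ φ = 0 ↔
      if Even N then z * starRingEnd ℂ z = 1 else z + starRingEnd ℂ z = 0) := by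
  intro φ
  have hf : ∀ k : Fin N, φ k = psi z (k : ℕ) := fun k => rfl
  have hN1 : N - 1 < N := by omega
  set jl : Fin N := ⟨N - 1, hN1⟩ with hjl
  have hlast := row N z φ hf jl
  have hjn : (jl : ℕ) = N - 1 := rfl
  rw [hjn] at hlast
  have hne0 : ¬ (N - 1 = 0) := by omega
  have hlt : ¬ (N - 1 + 1 < N) := by omega
  have hpos : 0 < N - 1 := by omega
  rw [if_neg hne0, if_pos rfl, if_neg hlt, if_pos hpos] at hlast
  -- hlast : (M *ᵥ φ) jl = -conj z * psi z (N-1) + 0 + -psi z (N-1-1)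
  have hother : ∀ j : Fin N, (j : ℕ) ≠ N - 1 → (Mmat N 0 z *ᵥ φ) j = 0 := by
    intro j hj
    rw [row N z φ hf j]
    by_cases h0 : (j : ℕ) = 0
    · have h1 : (j : ℕ) + 1 < N := by omega
      rw [if_pos h0, if_pos h1, if_neg (by omega : ¬ 0 < (j : ℕ)), h0]
      have e0 : psi z 0 = 1 := by simpa using psi_even z 0
      have e1 : psi z 1 = -z := by
        have := psi_odd z 0
        norm_num at this
        simpa using this
      rw [e0, e1]
      ring
    · have h1 : (j : ℕ) + 1 < N := by omega
      rw [if_neg h0, if_neg hj, if_pos h1, if_pos (by omega : 0 < (j : ℕ))]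
      rcases Nat.even_or_odd (j : ℕ) with he | ho
      · obtain ⟨m, hm⟩ := he
        have hm' : (j : ℕ) = 2 * m := by omega
        have hm1 : 1 ≤ m := by omega
        have e1 : (j : ℕ) + 1 = 2 * m + 1 := by omega
        have e2 : (j : ℕ) - 1 = 2 * (m - 1) + 1 := by omega
        rw [e1, e2, psi_odd, psi_odd]
        have e3 : m - 1 + 1 = m := by omega
        rw [e3, pow_succ]
        ring
      · obtain ⟨m, hm⟩ := ho
        have e1 : (j : ℕ) + 1 = 2 * (m + 1) := by omega
        have e2 : (j : ℕ) - 1 = 2 * m := by omega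
        rw [e1, e2, psi_even, psi_even, pow_succ]
        ring
  have hiff : -(starRingEnd ℂ z) * psi z (N - 1) + 0 + -psi z (N - 1 - 1) = 0 ↔
      (if Even N then z * starRingEnd ℂ z = 1 else z + starRingEnd ℂ z = 0) := by
    rcases Nat.even_or_odd N with he | ho
    · obtain ⟨m, hm⟩ := he
      have hm1 : 1 ≤ m := by omega
      have e1 : N - 1 = 2 * (m - 1) + 1 := by omega
      have e2 : N - 1 - 1 = 2 * (m - 1) := by omega
      rw [if_pos (by exact ⟨m, hm⟩), e2, e1, psi_odd, psi_even]
      have hfac : -(starRingEnd ℂ z) * ((-1 : ℂ) ^ (m - 1 + 1) * z) + 0 + -(-1 : ℂ) ^ (m - 1)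
          = (-1 : ℂ) ^ (m - 1) * (z * starRingEnd ℂ z - 1) := by
        rw [pow_succ]; ring
      rw [hfac]
      constructor
      · intro h
        have h2 := (mul_eq_zero.mp h).resolve_left (pow_ne_zero _ (by norm_num))
        linear_combination h2
      · intro h
        rw [h]; ring
    · have hne : ¬ Even N := by
        rw [Nat.even_iff]; rw [Nat.odd_iff] at ho; omega
      obtain ⟨m, hm⟩ := ho
      have hm1 : 1 ≤ m := by omega
      have e1 : N - 1 = 2 * m := by omega
      have e2 : N - 1 - 1 = 2 * (m - 1) + 1 := by omega
      rw [if_neg hne, e2, e1, psi_even, psi_odd]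
      have e3 : m - 1 + 1 = m := by omega
      rw [e3]
      have hfac : -(starRingEnd ℂ z) * (-1 : ℂ) ^ m + 0 + -((-1 : ℂ) ^ m * z)
          = -((-1 : ℂ) ^ m) * (z + starRingEnd ℂ z) := by ring
      rw [hfac]
      constructor
      · intro h
        have h2 := (mul_eq_zero.mp h).resolve_left
          (neg_ne_zero.mpr (pow_ne_zero _ (by norm_num)))
        exact h2
      · intro h
        rw [h]; ring
  constructor
  · intro h
    have h1 := congrFun h jl
    rw [hlast] at h1
    simp only [Pi.zero_apply] at h1
    exact hiff.mp h1
  · intro h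
    funext j
    by_cases hj : (j : ℕ) = N - 1
    · have hjj : j = jl := Fin.ext hj
      rw [hjj, hlast]
      simpa using hiff.mpr h
    · simpa using hother j hj
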